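/- Let x, y, z be real numbers, let n₁, n₂ ≥ 2 be integers, and set n = n₁ + n₂, ξ = x − (y + z)/2, τ₁ = (n₁·|x − y| + (n₂ − 1)·|x − z|)/(n − 1), and τ₂ = ((n₁ − 1)·|x − y| + n₂·|x − z|)/(n − 1). If any one of the following four conditions holds: (i) x > y > z and n₁ > n₂ + 1; (ii) x > z > y and n₁ < n₂ − 1; (iii) y > x ≥ (3/4)y + (1/4)z > z and n₁ > 1 + ((n − 1)/2)·(y − z)/(2x − y − z); (iv) z > x ≥ (1/4)y + (3/4)z > y and n₁ < (n − 1)·(1 − (1/2)·(z − y)/(2x − y − z)); then ξ > max(τ₁, τ₂). -/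
import Mathlib
set_option maxHeartbeats 1000000


/-- case-by-case comparison of `ξ = x − (y+z)/2` with
`τ₁ = (n₁|x−y| + (n₂−1)|x−z|)/(n−1)` and `τ₂ = ((n₁−1)|x−y| + n₂|x−z|)/(n−1)`. -/
theorem stmt16 (x y z : ℝ) (n₁ n₂ : ℕ) (hn₁ : 2 ≤ n₁) (hn₂ : 2 ≤ n₂)
    (hcase :
      -- (i)
      (x > y ∧ y > z ∧ n₂ + 1 < n₁) ∨
      -- (ii)
      (x > z ∧ z > y ∧ n₁ + 1 < n₂) ∨
      -- (iii)
      (y > x ∧ x ≥ (3 / 4) * y + (1 / 4) * z ∧ (3 / 4) * y + (1 / 4) * z > z ∧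
        1 + (((n₁ + n₂ : ℕ) : ℝ) - 1) / 2 * ((y - z) / (2 * x - y - z)) < (n₁ : ℝ)) ∨
      -- (iv)
      (z > x ∧ x ≥ (1 / 4) * y + (3 / 4) * z ∧ (1 / 4) * y + (3 / 4) * z > y ∧
        (n₁ : ℝ) < (((n₁ + n₂ : ℕ) : ℝ) - 1) * (1 - (1 / 2) * ((z - y) / (2 * x - y - z))))) :
    max (((n₁ : ℝ) * |x - y| + ((n₂ : ℝ) - 1) * |x - z|) / (((n₁ + n₂ : ℕ) : ℝ) - 1))
        ((((n₁ : ℝ) - 1) * |x - y| + (n₂ : ℝ) * |x - z|) / (((n₁ + n₂ : ℕ) : ℝ) - 1))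
      < x - (y + z) / 2 := by
  have hN1 : (2:ℝ) ≤ (n₁:ℝ) := by exact_mod_cast hn₁
  have hN2 : (2:ℝ) ≤ (n₂:ℝ) := by exact_mod_cast hn₂
  have hcastN : (((n₁ + n₂ : ℕ) : ℝ)) = (n₁:ℝ) + (n₂:ℝ) := by push_cast; ring
  have hNpos : (0:ℝ) < (n₁:ℝ) + (n₂:ℝ) - 1 := by linarith
  rw [hcastN]
  rcases hcase with ⟨hxy, hyz, hn⟩ | ⟨hxz, hzy, hn⟩ | ⟨hyx, hx, hz, hn⟩ | ⟨hzx, hx, hz, hn⟩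
  · -- case (i): x > y > z, n₁ > n₂ + 1
    have hn' : (n₂:ℝ) + 1 < (n₁:ℝ) := by exact_mod_cast hn
    have h1 : |x - y| = x - y := abs_of_pos (by linarith)
    have h2 : |x - z| = x - z := abs_of_pos (by linarith)
    rw [h1, h2]
    apply max_lt <;> rw [div_lt_iff₀ hNpos] <;>
      nlinarith [mul_pos (show (0:ℝ) < (n₁:ℝ) - (n₂:ℝ) - 1 by linarith)
        (show (0:ℝ) < y - z by linarith),
        mul_pos (show (0:ℝ) < (n₁:ℝ) - (n₂:ℝ) + 1 by linarith)
        (show (0:ℝ) < y - z by linarith)]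
  · -- case (ii): x > z > y, n₂ > n₁ + 1
    have hn' : (n₁:ℝ) + 1 < (n₂:ℝ) := by exact_mod_cast hn
    have h1 : |x - y| = x - y := abs_of_pos (by linarith)
    have h2 : |x - z| = x - z := abs_of_pos (by linarith)
    rw [h1, h2]
    apply max_lt <;> rw [div_lt_iff₀ hNpos] <;>
      nlinarith [mul_pos (show (0:ℝ) < (n₂:ℝ) - (n₁:ℝ) - 1 by linarith)
        (show (0:ℝ) < z - y by linarith),
        mul_pos (show (0:ℝ) < (n₂:ℝ) - (n₁:ℝ) + 1 by linarith)
        (show (0:ℝ) < z - y by linarith)]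
  · -- case (iii)
    rw [hcastN] at hn
    have hd : (0:ℝ) < 2 * x - y - z := by linarith
    have hyz : z < y := by linarith
    have h1 : |x - y| = y - x := by rw [abs_sub_comm]; exact abs_of_pos (by linarith)
    have h2 : |x - z| = x - z := abs_of_pos (by linarith)
    -- from hn derive key linear inequality
    have hr : (y - z) / (2 * x - y - z) * (2 * x - y - z) = y - z :=
      div_mul_cancel₀ _ (ne_of_gt hd)
    have h3 : ((n₁:ℝ) + (n₂:ℝ) - 1) / 2 * ((y - z) / (2 * x - y - z)) < (n₁:ℝ) - 1 := by
      linarith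
    have h4 : ((n₁:ℝ) + (n₂:ℝ) - 1) / 2 * ((y - z) / (2 * x - y - z)) * (2 * x - y - z)
        < ((n₁:ℝ) - 1) * (2 * x - y - z) := mul_lt_mul_of_pos_right h3 hd
    have key : ((n₁:ℝ) + (n₂:ℝ) - 1) / 2 * (y - z) < ((n₁:ℝ) - 1) * (2 * x - y - z) := by
      nlinarith [hr]
    rw [h1, h2]
    apply max_lt <;> rw [div_lt_iff₀ hNpos] <;> linarith [key, hd]
  · -- case (iv)
    rw [hcastN] at hn
    have hd : (0:ℝ) < 2 * x - y - z := by linarith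
    have hzy : y < z := by linarith
    have h1 : |x - y| = x - y := abs_of_pos (by linarith)
    have h2 : |x - z| = z - x := by rw [abs_sub_comm]; exact abs_of_pos (by linarith)
    have hr : (z - y) / (2 * x - y - z) * (2 * x - y - z) = z - y :=
      div_mul_cancel₀ _ (ne_of_gt hd)
    have h4 : (n₁:ℝ) * (2 * x - y - z) <
        ((n₁:ℝ) + (n₂:ℝ) - 1) * (1 - 1 / 2 * ((z - y) / (2 * x - y - z))) * (2 * x - y - z) :=
      mul_lt_mul_of_pos_right hn hd
    have h5 : ((n₁:ℝ) + (n₂:ℝ) - 1) * (1 - 1 / 2 * ((z - y) / (2 * x - y - z)))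
          * (2 * x - y - z)
        = ((n₁:ℝ) + (n₂:ℝ) - 1) * ((2 * x - y - z) - 1 / 2 * (z - y)) := by
      field_simp
    have key : (n₁:ℝ) * (2 * x - y - z) <
        ((n₁:ℝ) + (n₂:ℝ) - 1) * ((2 * x - y - z) - 1 / 2 * (z - y)) := by
      rw [h5] at h4; exact h4
    rw [h1, h2]
    apply max_lt <;> rw [div_lt_iff₀ hNpos] <;> linarith [key, hd]
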